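/- arXiv:0906.3728 — 6 statements merged into one kernel-verified Lean document; each statement's English description precedes it below -/
import Mathlib

section
/- The polynomial F(X,u) = 𝒫(X) − u𝒬(X) is irreducible over the rational function field K(u). -/
/-!
Viewed as a polynomial in `u` over `K[X]`, `𝒫 - u 𝒬` is linear with coprime coefficients, so it is
irreducible in `K[X][u] = K[u][X]`; being of positive degree in `X` it is primitive over `K[u]`,
and Gauss's lemma carries irreducibility over to `K(u)`. Coprimality of `𝒫` and `𝒬` comes from
`𝒫 - ζ 𝒬 = (X - ζ)^ℓ` and `𝒫 - ζ⁻¹ 𝒬 = (X - ζ⁻¹)^ℓ`, which are coprime since `ζ ≠ ζ⁻¹`.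
-/

open Polynomial

open scoped Polynomial.Bivariate in
theorem Polynomial.irreducible_map_C_sub_C_X_mul_map_C {R : Type*} [CommRing R] [IsDomain R]
    {P Q : R[X]} (hPQ : IsCoprime P Q) (hQ : Q ≠ 0) :
    Irreducible (P.map C - C X * Q.map C : R[X][Y]) := by
  have hswap : Bivariate.swap (P.map C - C X * Q.map C : R[X][Y]) = C (-Q) * X + C P := by
    simp only [map_sub, map_mul, Bivariate.swap_map_C, Bivariate.swap_X, map_neg]
    ring
  rw [← MulEquiv.irreducible_iff Bivariate.swap, hswap]
  exact irreducible_C_mul_X_add_C (neg_ne_zero.mpr hQ) hPQ.symm.neg_left.isRelPrime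

theorem Polynomial.irreducible_map_sub_C_ratFuncX_mul_map {K : Type*} [Field K] {P Q : K[X]}
    (hPQ : IsCoprime P Q) (hP : P.natDegree ≠ 0) :
    Irreducible (P.map (algebraMap K (RatFunc K)) -
      C RatFunc.X * Q.map (algebraMap K (RatFunc K))) := by
  have hQ : Q ≠ 0 := by
    rintro rfl
    exact hP (natDegree_eq_zero_of_isUnit (isCoprime_zero_right.mp hPQ))
  have hirr := irreducible_map_C_sub_C_X_mul_map_C hPQ hQ
  have hdeg : (P.map C - C X * Q.map C : K[X][X]).natDegree ≠ 0 := by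
    refine ((Nat.pos_of_ne_zero hP).trans_le (le_natDegree_of_ne_zero fun h => ?_)).ne'
    have hP0 : P = 0 := by simpa [coeff_map] using congrArg (coeff · 0) h
    simp [hP0] at hP
  have := (hirr.isPrimitive hdeg).irreducible_iff_irreducible_map_fraction_map
    (K := RatFunc K) |>.mp hirr
  simpa [Polynomial.map_map, ← IsScalarTower.algebraMap_eq] using this

namespace Rikuna

variable {L : Type*} [Field L] (a b : L) (n : ℕ)

/-- With `a = ζ` and `b = ζ⁻¹`, `num` and `den` are the paper's `𝒫` and `𝒬`. -/
noncomputable def num : L[X] := C (b - a)⁻¹ * (C b * (X - C a) ^ n - C a * (X - C b) ^ n)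

noncomputable def den : L[X] := C (b - a)⁻¹ * ((X - C a) ^ n - (X - C b) ^ n)

variable {a b}

theorem C_inv_sub_mul_sub_C (hab : a ≠ b) : C (b - a)⁻¹ * (C b - C a) = 1 := by
  rw [← C_sub, ← C_mul, inv_mul_cancel₀ (sub_ne_zero.mpr hab.symm), C_1]

theorem num_sub_C_mul_den_left (hab : a ≠ b) : num a b n - C a * den a b n = (X - C a) ^ n := by
  rw [num, den]
  linear_combination (X - C a) ^ n * C_inv_sub_mul_sub_C hab

theorem num_sub_C_mul_den_right (hab : a ≠ b) : num a b n - C b * den a b n = (X - C b) ^ n := by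
  rw [num, den]
  linear_combination (X - C b) ^ n * C_inv_sub_mul_sub_C hab

theorem isCoprime_num_den (hab : a ≠ b) : IsCoprime (num a b n) (den a b n) := by
  obtain ⟨u, v, huv⟩ :=
    (isCoprime_X_sub_C_of_isUnit_sub (sub_ne_zero.mpr hab).isUnit).pow (m := n) (n := n)
  rw [← num_sub_C_mul_den_left n hab, ← num_sub_C_mul_den_right n hab] at huv
  exact ⟨u + v, -(u * C a + v * C b), by linear_combination huv⟩

theorem coeff_num (hab : a ≠ b) : (num a b n).coeff n = 1 := by
  have hmonic (c : L) : ((X - C c) ^ n).coeff n = 1 := by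
    simpa using ((monic_X_sub_C c).pow n).coeff_natDegree
  rw [num, coeff_C_mul, coeff_sub, coeff_C_mul, coeff_C_mul, hmonic, hmonic, mul_one, mul_one,
    inv_mul_cancel₀ (sub_ne_zero.mpr hab.symm)]

end Rikuna

theorem Subfield.ne_inv_of_notMem {L : Type*} [Field L] {K : Subfield L} {x : L} (hx : x ∉ K) :
    x ≠ x⁻¹ := by
  intro h
  apply hx
  rcases eq_or_ne x 0 with rfl | h0
  · exact K.zero_mem
  have hsq : x * x = 1 := by
    nth_rw 2 [h]
    exact mul_inv_cancel₀ h0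
  rcases mul_self_eq_one_iff.mp hsq with rfl | rfl
  · exact K.one_mem
  · exact K.neg_mem K.one_mem

theorem stmt_0_general (ℓ : ℕ) (hℓ : ℓ.Prime)
    (L : Type*) [Field L]
    (K : Subfield L) (ζ : L) (hζK : ζ ∉ K)
    (P Q : Polynomial K)
    (hP : P.map K.subtype =
      C (ζ⁻¹ - ζ)⁻¹ * (C ζ⁻¹ * (X - C ζ) ^ ℓ - C ζ * (X - C ζ⁻¹) ^ ℓ))
    (hQ : Q.map K.subtype =
      C (ζ⁻¹ - ζ)⁻¹ * ((X - C ζ) ^ ℓ - (X - C ζ⁻¹) ^ ℓ)) :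
    Irreducible (P.map (algebraMap K (RatFunc K)) -
      C RatFunc.X * Q.map (algebraMap K (RatFunc K))) := by
  have hne : ζ ≠ ζ⁻¹ := Subfield.ne_inv_of_notMem hζK
  have hPQ : IsCoprime P Q := by
    rw [← isCoprime_map K.subtype, hP, hQ]
    exact Rikuna.isCoprime_num_den ℓ hne
  have hPℓ : P.coeff ℓ ≠ 0 := by
    intro h
    have h1 := Rikuna.coeff_num ℓ hne
    rw [Rikuna.num, ← hP, coeff_map, h, map_zero] at h1
    exact zero_ne_one h1
  exact irreducible_map_sub_C_ratFuncX_mul_map hPQ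
    (hℓ.pos.trans_le (le_natDegree_of_ne_zero hPℓ)).ne'

/-- Rikuna's polynomial `F(X,u) = 𝒫(X) - u 𝒬(X)` is irreducible over `K(u)`.
Here `ℓ` is an odd prime, `K` a field (realized as a subfield of a field `L`) of
characteristic not dividing `ℓ`, `ζ ∈ L` a primitive `ℓ`-th root of unity with `ζ ∉ K`
and `ζ + ζ⁻¹ ∈ K`, and `P, Q` are the polynomials with coefficients in `K` whose images
in `L[X]` are `𝒫(X) = (ζ⁻¹ - ζ)⁻¹ (ζ⁻¹(X - ζ)^ℓ - ζ(X - ζ⁻¹)^ℓ)` and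
`𝒬(X) = (ζ⁻¹ - ζ)⁻¹ ((X - ζ)^ℓ - (X - ζ⁻¹)^ℓ)`; `u` is the variable of `K(u) = RatFunc K`. -/
theorem stmt_0 (ℓ : ℕ) (hℓ : ℓ.Prime) (hodd : Odd ℓ)
    (L : Type*) [Field L] (hchar : (ℓ : L) ≠ 0)
    (K : Subfield L) (ζ : L) (hζ : IsPrimitiveRoot ζ ℓ) (hζK : ζ ∉ K) (hω : ζ + ζ⁻¹ ∈ K)
    (P Q : Polynomial K)
    (hP : P.map K.subtype =
      C (ζ⁻¹ - ζ)⁻¹ * (C ζ⁻¹ * (X - C ζ) ^ ℓ - C ζ * (X - C ζ⁻¹) ^ ℓ))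
    (hQ : Q.map K.subtype =
      C (ζ⁻¹ - ζ)⁻¹ * ((X - C ζ) ^ ℓ - (X - C ζ⁻¹) ^ ℓ)) :
    Irreducible (P.map (algebraMap K (RatFunc K)) -
      C RatFunc.X * Q.map (algebraMap K (RatFunc K))) :=
  stmt_0_general ℓ hℓ L K ζ hζK P Q hP hQ
end

section
/- Let q be an odd prime power and ℓ an odd prime not dividing q with q ≡ −1 (mod ℓ), let ζ be a primitive ℓ-th root of unity in the quadratic extension 𝔽_{q²} of 𝔽_q, and let ω = ζ + ζ^{-1}, which lies in 𝔽_q. Let m > 1 be an integer and γ ∈ 𝔽_q. If for every prime p dividing m the element γ² + ℓωγ + ℓ² of 𝔽_q (the norm of γ + ℓζ from 𝔽_{q²} to 𝔽_q) is not a p-th power in 𝔽_q, then the polynomial X^m − (γ + ℓζ) is irreducible over 𝔽_{q²}. -/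
/-!
Put `a = γ + ℓζ`. Since `ℓ ∣ q + 1`, the Frobenius `x ↦ x ^ q` sends `ζ` to `ζ⁻¹`, so the norm
`a · a^q` of `a` to `𝔽_q` is `γ² + ℓωγ + ℓ²`. As `𝔽_{q²}/𝔽_q` has even degree, `a` and `-a` have
the same norm, so `b ^ p = ±a` in `𝔽_{q²}` would make that norm the `p`-th power `N(b) ^ p`.
Hence neither `a` nor `-a` is a `p`-th power for any prime `p ∣ m`, and a Capelli-type criterion
gives irreducibility of `X ^ m - a`.
-/

open Polynomial IntermediateField

universe u

theorem Algebra.norm_neg_eq_neg_one_pow_mul {R S : Type*} [CommRing R] [Ring S] [Algebra R S]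
    [Module.Free R S] (y : S) :
    Algebra.norm R (-y) = (-1) ^ Module.finrank R S * Algebra.norm R y := by
  have h : (-1 : S) = algebraMap R S (-1) := by simp
  rw [neg_eq_neg_one_mul y, h, map_mul, Algebra.norm_algebraMap]

/-- The strengthening of the hypothesis to `-a` is what survives the norm in the inductive step:
the norm of a root of `X ^ p - a` is `±a`. -/
theorem X_pow_sub_C_irreducible_of_forall_prime_pow_ne_and_ne_neg {K : Type u} [Field K]
    {n : ℕ} (hn : n ≠ 0) {a : K}
    (ha : ∀ p : ℕ, p.Prime → p ∣ n → ∀ b : K, b ^ p ≠ a ∧ b ^ p ≠ -a) :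
    Irreducible (X ^ n - C a) := by
  induction n using induction_on_primes generalizing K a with
  | zero => exact absurd rfl hn
  | one => simpa using irreducible_X_sub_C a
  | prime_mul p n hp IH =>
    rw [mul_comm]
    apply X_pow_mul_sub_C_irreducible
      (X_pow_sub_C_irreducible_of_prime hp fun b ↦ (ha p hp (dvd_mul_right _ _) b).1)
    intro L _ _ x hx
    have hint : IsIntegral K x := not_not.mp fun h ↦ by
      simpa only [degree_zero, degree_X_pow_sub_C hp.pos,
        WithBot.natCast_ne_bot] using congr_arg degree (hx.symm.trans (dif_neg h))
    have hfin : Module.finrank K K⟮x⟯ = p := by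
      rw [adjoin.finrank hint, hx, natDegree_X_pow_sub_C]
    have hgen : Algebra.norm K (AdjoinSimple.gen K x) = (-1) ^ p * -a := by
      rw [← adjoin.powerBasis_gen hint, Algebra.PowerBasis.norm_gen_eq_coeff_zero_minpoly]
      simp [minpoly_gen, hx, hp.ne_zero.symm]
    have hnorm : ∀ y ∈ ({AdjoinSimple.gen K x, -AdjoinSimple.gen K x} : Set K⟮x⟯),
        Algebra.norm K y = a ∨ Algebra.norm K y = -a := by
      rintro y (rfl | rfl)
      · rw [hgen]
        rcases neg_one_pow_eq_or K p with h | h <;> simp [h]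
      · rw [Algebra.norm_neg_eq_neg_one_pow_mul, hfin, hgen, ← mul_assoc, ← pow_add,
          Even.neg_one_pow ⟨p, rfl⟩, one_mul]
        exact Or.inr rfl
    apply IH (right_ne_zero_of_mul hn)
    intro r hr hrn b
    have hb : ∀ y ∈ ({AdjoinSimple.gen K x, -AdjoinSimple.gen K x} : Set K⟮x⟯), b ^ r ≠ y := by
      rintro y hy rfl
      obtain ⟨hne, hne_neg⟩ := ha r hr (dvd_mul_of_dvd_right hrn p) (Algebra.norm K b)
      rw [← map_pow] at hne hne_neg
      exact (hnorm _ hy).elim hne hne_neg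
    exact ⟨hb _ (by simp), hb _ (by simp)⟩

theorem pow_ne_and_pow_ne_neg_of_forall_pow_ne_norm {F E : Type*} [Field F] [Field E]
    [Algebra F E] (hE : Even (Module.finrank F E)) {p : ℕ} {a : E}
    (ha : ∀ c : F, c ^ p ≠ Algebra.norm F a) (b : E) : b ^ p ≠ a ∧ b ^ p ≠ -a := by
  have hneg : Algebra.norm F (-a) = Algebra.norm F a := by
    rw [Algebra.norm_neg_eq_neg_one_pow_mul, hE.neg_one_pow, one_mul]
  refine ⟨fun hb ↦ ha (Algebra.norm F b) ?_, fun hb ↦ ha (Algebra.norm F b) ?_⟩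
  · rw [← map_pow, hb]
  · rw [← map_pow, hb, hneg]

namespace FiniteField

variable {F E : Type*} [Field F] [Field E] [Algebra F E] [Fintype F] [Fintype E]

theorem finrank_eq_of_card_eq_pow {n : ℕ} (h : Fintype.card E = Fintype.card F ^ n) :
    Module.finrank F E = n :=
  Nat.pow_right_injective Fintype.one_lt_card (Module.card_eq_pow_finrank.symm.trans h)

theorem algebraMap_norm_eq_mul_pow_card (hE : Module.finrank F E = 2) (x : E) :
    algebraMap F E (Algebra.norm F x) = x * x ^ Fintype.card F := by
  simp [algebraMap_norm_eq_prod_pow, hE, Finset.prod_range_succ]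

theorem norm_algebraMap_add_algebraMap_mul (hE : Module.finrank F E = 2) {ζ : E}
    (hζ : ζ ^ (Fintype.card F + 1) = 1) {ω : F} (hω : algebraMap F E ω = ζ + ζ⁻¹) (γ c : F) :
    Algebra.norm F (algebraMap F E γ + algebraMap F E c * ζ) = γ ^ 2 + c * ω * γ + c ^ 2 := by
  have hζ0 : ζ ≠ 0 := by rintro rfl; simp at hζ
  have hfrob : ζ ^ Fintype.card F = ζ⁻¹ := eq_inv_of_mul_eq_one_left (by rwa [← pow_succ])
  have hconj : (algebraMap F E γ + algebraMap F E c * ζ) ^ Fintype.card F =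
      algebraMap F E γ + algebraMap F E c * ζ⁻¹ := by
    change frobeniusAlgHom F E _ = _
    rw [map_add, map_mul, AlgHom.commutes, AlgHom.commutes, frobeniusAlgHom_apply, hfrob]
  apply (algebraMap F E).injective
  rw [algebraMap_norm_eq_mul_pow_card hE, hconj]
  simp only [map_add, map_mul, map_pow, hω]
  linear_combination (algebraMap F E c) ^ 2 * mul_inv_cancel₀ hζ0

end FiniteField

theorem stmt_6_general (q ℓ : ℕ) (hcong : ℓ ∣ q + 1)
    (F E : Type*) [Field F] [Field E] [Algebra F E] [Fintype F] [Fintype E]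
    (hcardF : Fintype.card F = q) (hcardE : Fintype.card E = q ^ 2)
    (ζ : E) (hζ : IsPrimitiveRoot ζ ℓ)
    (ω : F) (hω : algebraMap F E ω = ζ + ζ⁻¹)
    (m : ℕ) (hm : 1 < m) (γ : F)
    (hnorm : ∀ p : ℕ, p.Prime → p ∣ m →
      ∀ b : F, b ^ p ≠ γ ^ 2 + (ℓ : F) * ω * γ + (ℓ : F) ^ 2) :
    Irreducible (Polynomial.X ^ m -
      Polynomial.C (algebraMap F E γ + (ℓ : E) * ζ)) := by
  have hE : Module.finrank F E = 2 :=
    FiniteField.finrank_eq_of_card_eq_pow (by rw [hcardE, hcardF])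
  have hζq : ζ ^ (Fintype.card F + 1) = 1 := hcardF ▸ (hζ.pow_eq_one_iff_dvd _).2 hcong
  have hN : Algebra.norm F (algebraMap F E γ + (ℓ : E) * ζ) =
      γ ^ 2 + (ℓ : F) * ω * γ + (ℓ : F) ^ 2 := by
    rw [← map_natCast (algebraMap F E)]
    exact FiniteField.norm_algebraMap_add_algebraMap_mul hE hζq hω γ ℓ
  refine X_pow_sub_C_irreducible_of_forall_prime_pow_ne_and_ne_neg (by omega) fun p hp hpm ↦
    pow_ne_and_pow_ne_neg_of_forall_pow_ne_norm (hE ▸ even_two) ?_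
  rw [hN]
  exact hnorm p hp hpm

/-- Let `q` be an odd prime power, `ℓ` an odd prime with `ℓ ∤ q` and `q ≡ -1 (mod ℓ)`,
`ζ` a primitive `ℓ`-th root of unity in the quadratic extension `E = 𝔽_{q²}` of `F = 𝔽_q`,
and `ω = ζ + ζ⁻¹ ∈ 𝔽_q`.  Let `m > 1` and `γ ∈ 𝔽_q`.  If for every prime `p ∣ m` the norm
`γ² + ℓωγ + ℓ²` of `γ + ℓζ` is not a `p`-th power in `𝔽_q`, then `X^m - (γ + ℓζ)` is
irreducible over `𝔽_{q²}`. -/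
theorem stmt_6 (q ℓ : ℕ) (hqodd : Odd q) (hq : IsPrimePow q)
    (hℓ : ℓ.Prime) (hℓodd : Odd ℓ) (hℓq : ¬ ℓ ∣ q) (hcong : ℓ ∣ q + 1)
    (F E : Type*) [Field F] [Field E] [Algebra F E] [Fintype F] [Fintype E]
    (hcardF : Fintype.card F = q) (hcardE : Fintype.card E = q ^ 2)
    (ζ : E) (hζ : IsPrimitiveRoot ζ ℓ)
    (ω : F) (hω : algebraMap F E ω = ζ + ζ⁻¹)
    (m : ℕ) (hm : 1 < m) (γ : F)
    (hnorm : ∀ p : ℕ, p.Prime → p ∣ m →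
      ∀ b : F, b ^ p ≠ γ ^ 2 + (ℓ : F) * ω * γ + (ℓ : F) ^ 2) :
    Irreducible (Polynomial.X ^ m -
      Polynomial.C (algebraMap F E γ + (ℓ : E) * ζ)) :=
  stmt_6_general q ℓ hcong F E hcardF hcardE ζ hζ ω hω m hm γ hnorm
end

section
/- Let m > 1 be an integer with exactly t distinct prime divisors and square-free part (radical) m₀, let q be an odd prime power with m₀ dividing q − 1, and let d be a nonzero element of 𝔽_q. Let T = {η ∈ 𝔽_q : η is a square in 𝔽_q and, for every prime p dividing m, η + d is not a p-th power in 𝔽_q}. Then |#T − (q/2)·(φ(m₀)/m₀)| ≤ 2^{t−1}·√q + 2^{t+1}, where φ is Euler's totient function. -/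
/-!
Write `1_e` for the indicator of the `e`-th powers in `𝔽_q`. For distinct primes, being a `p`-th
power for every `p ∈ S` is the same as being a `∏ S`-th power, so inclusion–exclusion writes `#T` as
`∑_{S ⊆ P} (-1)^|S| W(∏ S)` with `W(e) = ∑_η 1_2(η) 1_e(η + d)`, while Euler's product writes
`(q/2) φ(m₀)/m₀` as `∑_{S ⊆ P} (-1)^|S| q/(2 ∏ S)`. It therefore suffices to show
`|W(e) - q/(2e)| ≤ √q/2 + 2` for every `e ∣ q - 1`.

For `e ∣ q - 1` and `x ≠ 0`, orthogonality over the `e` characters `χ` with `χ^e = 1` gives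
`1_e(x) = e⁻¹ ∑_χ χ(x)`. Expanding both indicators turns `W(e)` into sums
`∑_η ψ(η) χ(η + d) = ψ(-d) χ(d) J(ψ, χ)`; the trivial pair contributes the main term `q - 2`,
a pair with exactly one trivial character contributes a root of unity, and the remaining pairs
are Jacobi sums of absolute value at most `√q`.
-/

open Finset
open scoped Classical

section Powers

variable {K : Type*} [CommGroupWithZero K]

theorem exists_pow_mul_iff_of_coprime {m n : ℕ} (hmn : m.Coprime n) (x : K) :
    (∃ c, c ^ (m * n) = x) ↔ (∃ a, a ^ m = x) ∧ ∃ b, b ^ n = x := by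
  refine ⟨fun ⟨c, hc⟩ ↦ ⟨⟨c ^ n, by rw [← pow_mul, mul_comm, hc]⟩, ⟨c ^ m, by rw [← pow_mul, hc]⟩⟩,
    fun ⟨⟨a, ha⟩, ⟨b, hb⟩⟩ ↦ ?_⟩
  obtain ⟨c, rfl, -⟩ := (pow_eq_pow_iff_of_coprime hmn).mp (ha.trans hb.symm)
  exact ⟨c, by rw [← ha, ← pow_mul, mul_comm]⟩

theorem exists_pow_prod_iff_forall_of_prime {S : Finset ℕ} (hS : ∀ p ∈ S, p.Prime) (x : K) :
    (∃ c, c ^ (∏ p ∈ S, p) = x) ↔ ∀ p ∈ S, ∃ c, c ^ p = x := by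
  induction S using Finset.induction_on with
  | empty => simp [eq_comm]
  | insert p S hpS ih =>
    have hp := hS p (mem_insert_self p S)
    have hS' := fun r hr ↦ hS r (mem_insert_of_mem hr)
    have hcop : p.Coprime (∏ r ∈ S, r) := Nat.Coprime.prod_right fun r hr ↦
      (Nat.coprime_primes hp (hS' r hr)).mpr (ne_of_mem_of_not_mem hr hpS).symm
    rw [prod_insert hpS, exists_pow_mul_iff_of_coprime hcop, ih hS', forall_mem_insert]

end Powers

theorem norm_sum_sub_le_of_norm_le {ι E : Type*} [Fintype ι] [SeminormedAddCommGroup E]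
    (f : ι → E) (i₀ : ι) (a : E) {b c : ℝ} (h₀ : ‖f i₀ - a‖ ≤ b) (h : ∀ i ≠ i₀, ‖f i‖ ≤ c) :
    ‖∑ i, f i - a‖ ≤ b + (Fintype.card ι - 1) * c := by
  rw [← add_sum_erase _ _ (mem_univ i₀), add_sub_right_comm]
  have hcard : (#(univ.erase i₀) : ℝ) = Fintype.card ι - 1 := by
    rw [card_erase_of_mem (mem_univ _), card_univ, Nat.cast_sub (Fintype.card_pos_iff.mpr ⟨i₀⟩),
      Nat.cast_one]
  calc ‖f i₀ - a + ∑ i ∈ univ.erase i₀, f i‖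
      ≤ ‖f i₀ - a‖ + ∑ i ∈ univ.erase i₀, ‖f i‖ :=
        (norm_add_le _ _).trans (by gcongr; exact norm_sum_le _ _)
    _ ≤ b + (Fintype.card ι - 1) * c := by
      rw [← hcard, ← nsmul_eq_mul]
      exact add_le_add h₀ (sum_le_card_nsmul _ _ _ fun i hi ↦ h i (ne_of_mem_erase hi))

section Characters

variable {F : Type*} [Field F] [Fintype F]

theorem ne_zero_of_dvd_card_sub_one {e : ℕ} (he : e ∣ Fintype.card F - 1) : e ≠ 0 := by
  rintro rfl
  have := Fintype.one_lt_card (α := F)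
  omega

noncomputable instance : Fintype (MulChar F ℂ) := Fintype.ofFinite _

instance : IsCyclic (MulChar F ℂ) :=
  isCyclic_of_surjective _ (MulChar.mulEquiv_units F ℂ).some.symm.surjective

theorem MulChar.norm_apply_eq_one (χ : MulChar F ℂ) {x : F} (hx : x ≠ 0) : ‖χ x‖ = 1 :=
  Complex.norm_eq_one_of_mem_rootsOfUnity (χ.apply_mem_rootsOfUnity (Units.mk0 x hx))

theorem MulChar.norm_apply_le_one (χ : MulChar F ℂ) (x : F) : ‖χ x‖ ≤ 1 := by
  rcases eq_or_ne x 0 with rfl | hx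
  · simp
  · exact (χ.norm_apply_eq_one hx).le

theorem norm_jacobiSum_eq_sqrt {χ ψ : MulChar F ℂ} (hχ : χ ≠ 1) (hψ : ψ ≠ 1) (hχψ : χ * ψ ≠ 1) :
    ‖jacobiSum χ ψ‖ = √(Fintype.card F) := by
  have hchar : ringChar ℂ ≠ ringChar F := by
    rw [ringChar.eq_zero]
    exact (CharP.char_ne_zero_of_finite F (ringChar F)).symm
  have h := jacobiSum_mul_jacobiSum_inv hchar hχ hψ hχψ
  have hconj : jacobiSum χ⁻¹ ψ⁻¹ = star (jacobiSum χ ψ) := by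
    simp [jacobiSum, star_sum, MulChar.star_apply']
  rw [hconj, Complex.star_def, Complex.mul_conj, Complex.normSq_eq_norm_sq] at h
  have h' : ‖jacobiSum χ ψ‖ ^ 2 = Fintype.card F := by exact_mod_cast h
  rw [← h', Real.sqrt_sq (norm_nonneg _)]

theorem norm_jacobiSum_le_sqrt {χ ψ : MulChar F ℂ} (hχ : χ ≠ 1) (hψ : ψ ≠ 1) :
    ‖jacobiSum χ ψ‖ ≤ √(Fintype.card F) := by
  rcases eq_or_ne (χ * ψ) 1 with h | h
  · rw [eq_inv_of_mul_eq_one_right h, jacobiSum_nontrivial_inv hχ, norm_neg,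
      χ.norm_apply_eq_one (neg_ne_zero.mpr one_ne_zero)]
    exact Real.one_le_sqrt.mpr (by exact_mod_cast Fintype.card_pos)
  · exact (norm_jacobiSum_eq_sqrt hχ hψ h).le

theorem sum_mulChar_mul_apply_add (χ ψ : MulChar F ℂ) {d : F} (hd : d ≠ 0) :
    ∑ x, χ x * ψ (x + d) = χ (-d) * ψ d * jacobiSum χ ψ := by
  rw [jacobiSum, mul_sum]
  refine (Fintype.sum_bijective (-d * ·) (mulLeft_bijective₀ _ (neg_ne_zero.mpr hd)) _ _
    fun x ↦ ?_).symm
  rw [show -d * x + d = d * (1 - x) by ring, map_mul, map_mul]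
  ring

theorem sum_one_mul_one_apply_add {d : F} (hd : d ≠ 0) :
    ∑ x, (1 : MulChar F ℂ) x * (1 : MulChar F ℂ) (x + d) = Fintype.card F - 2 := by
  rw [sum_mulChar_mul_apply_add _ _ hd, jacobiSum_one_one,
    MulChar.one_apply (neg_ne_zero.mpr hd).isUnit, MulChar.one_apply hd.isUnit, one_mul, one_mul]

theorem sum_mul_one_apply_add {χ : MulChar F ℂ} (hχ : χ ≠ 1) {d : F} (hd : d ≠ 0) :
    ∑ x, χ x * (1 : MulChar F ℂ) (x + d) = -χ (-d) := by
  rw [sum_mulChar_mul_apply_add _ _ hd, jacobiSum_comm, jacobiSum_one_nontrivial hχ,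
    MulChar.one_apply hd.isUnit]
  ring

theorem sum_one_mul_apply_add {χ : MulChar F ℂ} (hχ : χ ≠ 1) {d : F} (hd : d ≠ 0) :
    ∑ x, (1 : MulChar F ℂ) x * χ (x + d) = -χ d := by
  rw [sum_mulChar_mul_apply_add _ _ hd, jacobiSum_one_nontrivial hχ,
    MulChar.one_apply (neg_ne_zero.mpr hd).isUnit]
  ring

theorem norm_sum_mulChar_mul_apply_add_le {χ ψ : MulChar F ℂ} (hχ : χ ≠ 1) (hψ : ψ ≠ 1) {d : F}
    (hd : d ≠ 0) : ‖∑ x, χ x * ψ (x + d)‖ ≤ √(Fintype.card F) := by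
  rw [sum_mulChar_mul_apply_add χ ψ hd, norm_mul, norm_mul,
    χ.norm_apply_eq_one (neg_ne_zero.mpr hd), ψ.norm_apply_eq_one hd, one_mul, one_mul]
  exact norm_jacobiSum_le_sqrt hχ hψ

variable (F) in
noncomputable abbrev charsOfOrderDvd (e : ℕ) : Subgroup (MulChar F ℂ) :=
  (powMonoidHom e : MulChar F ℂ →* MulChar F ℂ).ker

theorem card_charsOfOrderDvd {e : ℕ} (he : e ∣ Fintype.card F - 1) :
    Fintype.card (charsOfOrderDvd F e) = e := by
  rw [← Nat.card_eq_fintype_card, IsCyclic.card_powMonoidHom_ker,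
    MulChar.card_eq_card_units_of_hasEnoughRootsOfUnity, Nat.card_eq_fintype_card,
    Fintype.card_units, Nat.gcd_eq_right he]

/-- The characters trivial on the subgroup of `e`-th powers are those with `χ ^ e = 1`, and by
duality they separate that subgroup from the other units. -/
theorem MulChar.exists_pow_eq_one_apply_ne_one {e : ℕ} {x : F} (hx : x ≠ 0)
    (hxe : ¬∃ c, c ^ e = x) : ∃ χ : MulChar F ℂ, χ ^ e = 1 ∧ χ x ≠ 1 := by
  set H := (powMonoidHom e : Fˣ →* Fˣ).range
  have hxH : Units.mk0 x hx ∉ H := by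
    rintro ⟨c, hc⟩
    exact hxe ⟨c, by simpa [Units.ext_iff] using hc⟩
  rw [← OrderIso.symm_apply_apply (subgroupOrderIsoSubgroupMulChar F ℂ) H,
    ← OrderDual.toDual_ofDual (subgroupOrderIsoSubgroupMulChar F ℂ H),
    mem_subgroupOrderIsoSubgroupMulChar_symm_iff] at hxH
  push Not at hxH
  obtain ⟨χ, hχH, hχx⟩ := hxH
  rw [mem_subgroupOrderIsoSubgroupMulChar_iff] at hχH
  refine ⟨χ, MulChar.ext fun a ↦ ?_, hχx⟩
  rw [MulChar.pow_apply_coe, MulChar.one_apply_coe, ← map_pow, ← Units.val_pow_eq_pow_val]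
  exact hχH _ ⟨a, rfl⟩

theorem sum_charsOfOrderDvd_apply {e : ℕ} (he : e ∣ Fintype.card F - 1) {x : F} (hx : x ≠ 0) :
    ∑ χ : charsOfOrderDvd F e, (χ : MulChar F ℂ) x = if ∃ c, c ^ e = x then (e : ℂ) else 0 := by
  have he0 := ne_zero_of_dvd_card_sub_one he
  let ev : charsOfOrderDvd F e →* ℂ :=
    ((MulChar.mulCharEquiv F ℂ).symm (Units.mk0 x hx)).toMonoidHom.comp (Subgroup.subtype _)
  have hev : ∀ χ, ev χ = (χ : MulChar F ℂ) x := fun χ ↦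
    MulChar.mulCharEquiv_symm_apply_apply (Units.mk0 x hx) (χ : MulChar F ℂ)
  have hev_eq_one : ev = 1 ↔ ∃ c, c ^ e = x := by
    rw [DFunLike.ext_iff]
    simp only [hev, MonoidHom.one_apply, Subtype.forall, MonoidHom.mem_ker,
      powMonoidHom_apply]
    refine ⟨not_imp_not.mp fun h ↦ ?_, ?_⟩
    · obtain ⟨χ, hχe, hχx⟩ := MulChar.exists_pow_eq_one_apply_ne_one hx h
      exact fun hall ↦ hχx (hall χ hχe)
    · rintro ⟨c, rfl⟩ χ hχ
      have hc : c ≠ 0 := (pow_ne_zero_iff he0).mp hx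
      rw [map_pow, ← MulChar.pow_apply' χ he0, hχ, MulChar.one_apply hc.isUnit]
  simp_rw [← hev, sum_hom_units ev, card_charsOfOrderDvd he, hev_eq_one]
  split_ifs <;> simp

noncomputable def powIndicator (e : ℕ) (x : F) : ℂ := if ∃ c : F, c ^ e = x then 1 else 0

theorem powIndicator_eq {e : ℕ} (he : e ∣ Fintype.card F - 1) (x : F) :
    powIndicator e x =
      (if x = 0 then 1 else 0) + (e : ℂ)⁻¹ * ∑ χ : charsOfOrderDvd F e, (χ : MulChar F ℂ) x := by
  have he0 := ne_zero_of_dvd_card_sub_one he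
  rcases eq_or_ne x 0 with rfl | hx
  · simp [powIndicator, he0, MulChar.map_zero]
  · rw [sum_charsOfOrderDvd_apply he hx, powIndicator]
    split_ifs <;> simp_all

theorem sum_mul_powIndicator_add {e : ℕ} (he : e ∣ Fintype.card F - 1) (f : F → ℂ) (c : F) :
    ∑ x, f x * powIndicator e (x + c) =
      f (-c) + (e : ℂ)⁻¹ * ∑ χ : charsOfOrderDvd F e, ∑ x, f x * (χ : MulChar F ℂ) (x + c) := by
  simp_rw [powIndicator_eq he, mul_add, sum_add_distrib, add_eq_zero_iff_eq_neg, mul_ite, mul_one,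
    mul_zero, sum_ite_eq', mem_univ, if_true, mul_sum, mul_left_comm (f _)]
  rw [sum_comm]

theorem prod_powIndicator {S : Finset ℕ} (hS : ∀ p ∈ S, p.Prime) (x : F) :
    ∏ p ∈ S, powIndicator p x = powIndicator (∏ p ∈ S, p) x := by
  simp only [powIndicator, prod_boole, exists_pow_prod_iff_forall_of_prime hS]

theorem prod_one_sub_powIndicator {P : Finset ℕ} (hP : ∀ p ∈ P, p.Prime) (x : F) :
    ∏ p ∈ P, (1 - powIndicator p x) =
      ∑ S ∈ P.powerset, (-1) ^ #S * powIndicator (∏ p ∈ S, p) x := by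
  rw [prod_sub]
  refine sum_congr rfl fun S hS ↦ ?_
  rw [prod_const_one, mul_one, prod_powIndicator fun p hp ↦ hP p (mem_powerset.mp hS hp)]

theorem sum_powIndicator_two_mul (h2 : 2 ∣ Fintype.card F - 1) (χ : MulChar F ℂ) (d : F) :
    ∑ x, powIndicator 2 x * χ (x + d) =
      χ d + 2⁻¹ * ∑ ψ : charsOfOrderDvd F 2, ∑ x, (ψ : MulChar F ℂ) x * χ (x + d) := by
  have h := sum_mul_powIndicator_add h2 (fun x ↦ χ (x + d)) 0
  simp only [add_zero, neg_zero, zero_add, Nat.cast_ofNat] at h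
  simp_rw [mul_comm (powIndicator 2 _), h, mul_comm (χ _)]

theorem norm_sum_powIndicator_two_mul_one_sub_le (h2 : 2 ∣ Fintype.card F - 1) {d : F}
    (hd : d ≠ 0) :
    ‖∑ x, powIndicator 2 x * (1 : MulChar F ℂ) (x + d) - Fintype.card F / 2‖ ≤ 1 / 2 := by
  have hsum := norm_sum_sub_le_of_norm_le
    (fun ψ : charsOfOrderDvd F 2 ↦ ∑ x, (ψ : MulChar F ℂ) x * (1 : MulChar F ℂ) (x + d)) 1
    (Fintype.card F - 2) (b := 0) (c := 1) (by simp [sum_one_mul_one_apply_add hd])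
    fun ψ hψ ↦ by
      rw [sum_mul_one_apply_add (by exact_mod_cast hψ) hd, norm_neg]
      exact MulChar.norm_apply_le_one _ _
  rw [card_charsOfOrderDvd h2] at hsum
  rw [sum_powIndicator_two_mul h2, MulChar.one_apply hd.isUnit]
  set S := ∑ ψ : charsOfOrderDvd F 2, ∑ x, (ψ : MulChar F ℂ) x * (1 : MulChar F ℂ) (x + d)
  rw [show 1 + 2⁻¹ * S - Fintype.card F / 2 = 2⁻¹ * (S - (Fintype.card F - 2)) by ring, norm_mul]
  norm_num at hsum ⊢
  linarith

theorem norm_sum_powIndicator_two_mul_le (h2 : 2 ∣ Fintype.card F - 1) {χ : MulChar F ℂ}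
    (hχ : χ ≠ 1) {d : F} (hd : d ≠ 0) :
    ‖∑ x, powIndicator 2 x * χ (x + d)‖ ≤ (√(Fintype.card F) + 1) / 2 := by
  have hsum := norm_sum_sub_le_of_norm_le
    (fun ψ : charsOfOrderDvd F 2 ↦ ∑ x, (ψ : MulChar F ℂ) x * χ (x + d)) 1 (-χ d) (b := 0)
    (c := √(Fintype.card F)) (by simp [sum_one_mul_apply_add hχ hd])
    fun ψ hψ ↦ norm_sum_mulChar_mul_apply_add_le (by exact_mod_cast hψ) hχ hd
  rw [card_charsOfOrderDvd h2] at hsum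
  rw [sum_powIndicator_two_mul h2]
  set S := ∑ ψ : charsOfOrderDvd F 2, ∑ x, (ψ : MulChar F ℂ) x * χ (x + d)
  calc ‖χ d + 2⁻¹ * S‖ = ‖2⁻¹ * χ d + 2⁻¹ * (S + χ d)‖ := by ring_nf
    _ ≤ 2⁻¹ * 1 + 2⁻¹ * √(Fintype.card F) := by
      refine (norm_add_le _ _).trans ?_
      rw [norm_mul, norm_mul, norm_inv, Complex.norm_ofNat]
      gcongr
      · exact χ.norm_apply_le_one d
      · norm_num at hsum
        exact hsum
    _ = (√(Fintype.card F) + 1) / 2 := by ring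

theorem norm_sum_powIndicator_two_mul_powIndicator_sub_le (h2 : 2 ∣ Fintype.card F - 1) {e : ℕ}
    (he : e ∣ Fintype.card F - 1) {d : F} (hd : d ≠ 0) :
    ‖∑ x, powIndicator 2 x * powIndicator e (x + d) - Fintype.card F / (2 * e)‖ ≤
      √(Fintype.card F) / 2 + 2 := by
  have hsum := norm_sum_sub_le_of_norm_le
    (fun χ : charsOfOrderDvd F e ↦ ∑ x, powIndicator 2 x * (χ : MulChar F ℂ) (x + d)) 1
    (Fintype.card F / 2) (norm_sum_powIndicator_two_mul_one_sub_le h2 hd)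
    fun χ hχ ↦ norm_sum_powIndicator_two_mul_le h2 (by exact_mod_cast hχ) hd
  rw [card_charsOfOrderDvd he] at hsum
  rw [sum_mul_powIndicator_add he]
  set S := ∑ χ : charsOfOrderDvd F e, ∑ x, powIndicator 2 x * (χ : MulChar F ℂ) (x + d)
  have he0 : (e : ℂ) ≠ 0 := by exact_mod_cast ne_zero_of_dvd_card_sub_one he
  have hind : ‖powIndicator 2 (-d)‖ ≤ 1 := by
    unfold powIndicator
    split_ifs <;> simp
  calc ‖powIndicator 2 (-d) + (e : ℂ)⁻¹ * S - Fintype.card F / (2 * e)‖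
      = ‖powIndicator 2 (-d) + (e : ℂ)⁻¹ * (S - Fintype.card F / 2)‖ := by
        congr 1
        field_simp
        ring
    _ ≤ 1 + (e : ℝ)⁻¹ * (1 / 2 + (e - 1) * ((√(Fintype.card F) + 1) / 2)) := by
      refine (norm_add_le _ _).trans ?_
      rw [norm_mul, norm_inv, Complex.norm_natCast]
      gcongr
    _ ≤ √(Fintype.card F) / 2 + 2 := by
      have hs := Real.sqrt_nonneg (Fintype.card F)
      have he' : (e : ℝ) ≠ 0 := by exact_mod_cast ne_zero_of_dvd_card_sub_one he
      have hu : 0 < (e : ℝ)⁻¹ := by positivity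
      have hue : (e : ℝ)⁻¹ * e = 1 := inv_mul_cancel₀ he'
      nlinarith [mul_nonneg hu.le hs]

theorem natCast_card_eq_sum_powerset {m : ℕ} (hm : m ≠ 0) (d : F) :
    (Nat.card {x : F // (∃ b : F, b ^ 2 = x) ∧
        ∀ p : ℕ, p.Prime → p ∣ m → ∀ b : F, b ^ p ≠ x + d} : ℂ) =
      ∑ S ∈ m.primeFactors.powerset,
        (-1) ^ #S * ∑ x, powIndicator 2 x * powIndicator (∏ p ∈ S, p) (x + d) := by
  have h1 : ∀ x p, 1 - powIndicator p (x + d) = if ¬∃ b, b ^ p = x + d then 1 else 0 := by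
    intro x p
    unfold powIndicator
    split_ifs <;> simp_all
  have hcount : (Nat.card {x : F // (∃ b : F, b ^ 2 = x) ∧
        ∀ p : ℕ, p.Prime → p ∣ m → ∀ b : F, b ^ p ≠ x + d} : ℂ) =
      ∑ x, powIndicator 2 x * ∏ p ∈ m.primeFactors, (1 - powIndicator p (x + d)) := by
    rw [Nat.card_eq_fintype_card, Fintype.card_subtype, natCast_card_filter]
    refine sum_congr rfl fun x _ ↦ ?_
    rw [prod_congr rfl fun p _ ↦ h1 x p, prod_boole, powIndicator, ite_zero_mul_ite_zero, mul_one]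
    simp [Nat.mem_primeFactors, hm]
  simp_rw [hcount, prod_one_sub_powIndicator (fun p ↦ Nat.prime_of_mem_primeFactors), mul_sum,
    mul_left_comm (powIndicator 2 _)]
  exact sum_comm

end Characters

theorem Nat.totient_div_eq_sum_powerset {n : ℕ} (hn : n ≠ 0) :
    (n.totient : ℝ) / n = ∑ S ∈ n.primeFactors.powerset, (-1) ^ #S / ∏ p ∈ S, (p : ℝ) := by
  have h := congrArg (Rat.cast : ℚ → ℝ) (Nat.totient_eq_mul_prod_factors n)
  push_cast at h
  rw [h, mul_div_cancel_left₀ _ (by exact_mod_cast hn), prod_sub]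
  simp [div_eq_mul_inv]

theorem stmt_9_general (m : ℕ) (hm : 1 < m) (q : ℕ) (hqodd : Odd q)
    (hdvd : (∏ p ∈ m.primeFactors, p) ∣ q - 1)
    (F : Type*) [Field F] [Fintype F] (hcard : Fintype.card F = q)
    (d : F) (hd : d ≠ 0) :
    |(Nat.card {η : F // (∃ b : F, b ^ 2 = η) ∧
        ∀ p : ℕ, p.Prime → p ∣ m → ∀ b : F, b ^ p ≠ η + d} : ℝ)
      - ((q : ℝ) / 2) *
          ((Nat.totient (∏ p ∈ m.primeFactors, p) : ℝ) / ((∏ p ∈ m.primeFactors, p : ℕ) : ℝ))|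
      ≤ (2 : ℝ) ^ (m.primeFactors.card - 1) * Real.sqrt q
        + (2 : ℝ) ^ (m.primeFactors.card + 1) := by
  subst hcard
  have hmain := Nat.totient_div_eq_sum_powerset (n := ∏ p ∈ m.primeFactors, p)
    (prod_ne_zero_iff.mpr fun p hp ↦ (Nat.prime_of_mem_primeFactors hp).ne_zero)
  rw [Nat.primeFactors_prod_primeFactors] at hmain
  rw [hmain, ← Real.norm_eq_abs, ← Complex.norm_real]
  push_cast
  rw [natCast_card_eq_sum_powerset (by omega) d, mul_sum, ← sum_sub_distrib]
  calc _ = ‖∑ S ∈ m.primeFactors.powerset, (-1) ^ #S *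
          (∑ x, powIndicator 2 x * powIndicator (∏ p ∈ S, p) (x + d)
            - Fintype.card F / (2 * (∏ p ∈ S, p : ℕ)))‖ := by
        congr 1
        refine sum_congr rfl fun S _ ↦ ?_
        push_cast
        ring
    _ ≤ ∑ S ∈ m.primeFactors.powerset, (√(Fintype.card F) / 2 + 2) := by
        refine (norm_sum_le _ _).trans (sum_le_sum fun S hS ↦ ?_)
        rw [norm_mul, norm_pow, norm_neg, norm_one, one_pow, one_mul]
        exact norm_sum_powIndicator_two_mul_powIndicator_sub_le
          (Nat.Odd.sub_odd hqodd odd_one).two_dvd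
          ((prod_dvd_prod_of_subset _ _ _ (mem_powerset.mp hS)).trans hdvd) hd
    _ = _ := by
        obtain ⟨t, ht⟩ := Nat.exists_eq_add_one_of_ne_zero
          (card_pos.mpr (Nat.nonempty_primeFactors.mpr hm)).ne'
        rw [sum_const, card_powerset, nsmul_eq_mul, ht, Nat.add_sub_cancel]
        push_cast
        ring

/-- Let `m > 1` have exactly `t` distinct prime divisors and radical `m₀`, let `q` be an
odd prime power with `m₀ ∣ q - 1`, and `d ∈ 𝔽_q` nonzero.  Let
`T = {η ∈ 𝔽_q : η is a square and for every prime p ∣ m, η + d is not a p-th power}`.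
Then `|#T - (q/2)(φ(m₀)/m₀)| ≤ 2^(t-1) √q + 2^(t+1)`. -/
theorem stmt_9 (m : ℕ) (hm : 1 < m) (q : ℕ) (hqodd : Odd q) (hq : IsPrimePow q)
    (hdvd : (∏ p ∈ m.primeFactors, p) ∣ q - 1)
    (F : Type*) [Field F] [Fintype F] (hcard : Fintype.card F = q)
    (d : F) (hd : d ≠ 0) :
    |(Nat.card {η : F // (∃ b : F, b ^ 2 = η) ∧
        ∀ p : ℕ, p.Prime → p ∣ m → ∀ b : F, b ^ p ≠ η + d} : ℝ)
      - ((q : ℝ) / 2) *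
          ((Nat.totient (∏ p ∈ m.primeFactors, p) : ℝ) / ((∏ p ∈ m.primeFactors, p : ℕ) : ℝ))|
      ≤ (2 : ℝ) ^ (m.primeFactors.card - 1) * Real.sqrt q
        + (2 : ℝ) ^ (m.primeFactors.card + 1) :=
  stmt_9_general m hm q hqodd hdvd F hcard d hd
end

section
/- Let m₀ be a square-free positive integer divisible by at least two primes, all of whose prime divisors are ≥ 7, let t be the number of distinct prime divisors of m₀, and let ℓ be an odd prime. Then ℓ·m₀ ≥ 16·(2^{t−2}·m₀/φ(m₀) + 1)² (as real numbers), where φ is Euler's totient function. -/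
/-!
Every prime factor of `m₀` is at least `7`, so `m₀ / φ(m₀) = ∏ p / (p - 1) ≤ (7/6)^t` and
`m₀ ≥ 7^t`; with `ℓ ≥ 3` it remains to check `16 (2^(t-2) (7/6)^t + 1)² ≤ 3 · 7^t`. This holds for
`t = 2`, and passing from `t` to `t + 1` multiplies the inner term by `7/3` and the right side by `7`.
-/

open Finset

namespace Nat

variable {n q : ℕ}

theorem pow_card_primeFactors_le (hn : n ≠ 0) (hq : ∀ p ∈ n.primeFactors, q ≤ p) :
    q ^ #n.primeFactors ≤ n :=
  calc q ^ #n.primeFactors = ∏ _p ∈ n.primeFactors, q := (prod_const q).symm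
    _ ≤ ∏ p ∈ n.primeFactors, p := prod_le_prod' hq
    _ ≤ n := le_of_dvd (pos_of_ne_zero hn) (prod_primeFactors_dvd n)

theorem sub_one_pow_mul_le_pow_mul_totient (hq : ∀ p ∈ n.primeFactors, q ≤ p) :
    (q - 1) ^ #n.primeFactors * n ≤ q ^ #n.primeFactors * φ n := by
  have hpos : 0 < ∏ p ∈ n.primeFactors, (p - 1) :=
    prod_pos fun p hp => Nat.sub_pos_of_lt (prime_of_mem_primeFactors hp).one_lt
  refine le_of_mul_le_mul_right ?_ hpos
  calc (q - 1) ^ #n.primeFactors * n * ∏ p ∈ n.primeFactors, (p - 1)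
      = φ n * ∏ p ∈ n.primeFactors, ((q - 1) * p) := by
        rw [mul_assoc, ← totient_mul_prod_primeFactors, prod_mul_distrib, prod_const]; ring
    _ ≤ φ n * ∏ p ∈ n.primeFactors, (q * (p - 1)) := by
        refine Nat.mul_le_mul_left _ (prod_le_prod' fun p hp => ?_)
        rw [Nat.sub_one_mul, Nat.mul_sub_one]
        exact Nat.sub_le_sub_left (hq p hp) _
    _ = q ^ #n.primeFactors * φ n * ∏ p ∈ n.primeFactors, (p - 1) := by
        rw [prod_mul_distrib, prod_const]; ring

theorem cast_div_totient_le (hq : 2 ≤ q) (hqn : ∀ p ∈ n.primeFactors, q ≤ p) :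
    (n : ℝ) / φ n ≤ ((q : ℝ) / (q - 1)) ^ #n.primeFactors := by
  rcases eq_or_ne n 0 with rfl | hn
  · simp
  have hφ : (0 : ℝ) < φ n := by exact_mod_cast totient_pos.mpr (pos_of_ne_zero hn)
  have hq1 : (0 : ℝ) < q - 1 := by
    have : (2 : ℝ) ≤ q := by exact_mod_cast hq
    linarith
  rw [div_pow, div_le_div_iff₀ hφ (by positivity)]
  have := sub_one_pow_mul_le_pow_mul_totient hqn
  rw [← Nat.cast_le (α := ℝ)] at this
  push_cast [show 1 ≤ q by omega] at this
  linarith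

end Nat

theorem sixteen_mul_sq_le_three_mul_seven_pow (s : ℕ) :
    16 * ((2 : ℝ) ^ s * (7 / 6) ^ (s + 2) + 1) ^ 2 ≤ 3 * 7 ^ (s + 2) := by
  induction s with
  | zero => norm_num
  | succ s ih =>
    have hlhs : (2 : ℝ) ^ (s + 1) * (7 / 6) ^ (s + 1 + 2) = 7 / 3 * (2 ^ s * (7 / 6) ^ (s + 2)) := by
      ring
    have hrhs : (3 : ℝ) * 7 ^ (s + 1 + 2) = 7 * (3 * 7 ^ (s + 2)) := by ring
    rw [hlhs, hrhs]
    have hx : (0 : ℝ) ≤ 2 ^ s * (7 / 6) ^ (s + 2) := by positivity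
    nlinarith

theorem stmt_12_general (m₀ : ℕ) (ht : 2 ≤ m₀.primeFactors.card)
    (h7 : ∀ p ∈ m₀.primeFactors, 7 ≤ p) (ℓ : ℕ) (hℓ : ℓ.Prime) (hℓodd : Odd ℓ) :
    (16 * ((2 : ℝ) ^ (m₀.primeFactors.card - 2) * (m₀ : ℝ) / (Nat.totient m₀ : ℝ) + 1) ^ 2 : ℝ)
      ≤ (ℓ : ℝ) * (m₀ : ℝ) := by
  have hm₀ : m₀ ≠ 0 := by rintro rfl; simp at ht
  have hℓ3 : (3 : ℝ) ≤ ℓ := by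
    have := hℓ.two_le
    obtain ⟨k, rfl⟩ := hℓodd
    exact_mod_cast (show 3 ≤ 2 * k + 1 by omega)
  have hratio := Nat.cast_div_totient_le (by norm_num) h7
  have hsize : (7 : ℝ) ^ #m₀.primeFactors ≤ m₀ := by
    exact_mod_cast Nat.pow_card_primeFactors_le hm₀ h7
  obtain ⟨s, hs⟩ : ∃ s, #m₀.primeFactors = s + 2 := ⟨_, (Nat.sub_add_cancel ht).symm⟩
  rw [hs, Nat.add_sub_cancel]
  rw [hs] at hratio hsize
  norm_num at hratio
  calc 16 * ((2 : ℝ) ^ s * m₀ / Nat.totient m₀ + 1) ^ 2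
      ≤ 16 * ((2 : ℝ) ^ s * (7 / 6) ^ (s + 2) + 1) ^ 2 := by rw [mul_div_assoc]; gcongr
    _ ≤ 3 * 7 ^ (s + 2) := sixteen_mul_sq_le_three_mul_seven_pow s
    _ ≤ ℓ * m₀ := by gcongr

/-- If `m₀` is squarefree with `t ≥ 2` distinct prime divisors, each at least `7`, and `ℓ` is
an odd prime, then `ℓ m₀ ≥ 16 (2^(t-2) m₀ / φ(m₀) + 1)²` as real numbers. -/
theorem stmt_12 (m₀ : ℕ) (hsf : Squarefree m₀) (ht : 2 ≤ m₀.primeFactors.card)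
    (h7 : ∀ p ∈ m₀.primeFactors, 7 ≤ p) (ℓ : ℕ) (hℓ : ℓ.Prime) (hℓodd : Odd ℓ) :
    (16 * ((2 : ℝ) ^ (m₀.primeFactors.card - 2) * (m₀ : ℝ) / (Nat.totient m₀ : ℝ) + 1) ^ 2 : ℝ)
      ≤ (ℓ : ℝ) * (m₀ : ℝ) :=
  stmt_12_general m₀ ht h7 ℓ hℓ hℓodd
end

section
/- The polynomial 𝒬(X) = (ζ^{-1} − ζ)^{-1}((X − ζ)^ℓ − (X − ζ^{-1})^ℓ) is separable, i.e. 𝒬(X) and its formal derivative 𝒬'(X) have no common root in any extension field (equivalently, 𝒬 has no repeated roots). -/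
open Polynomial

/-!
Write `A = (X - a)^(n-1)` and `B = (X - b)^(n-1)`, so that `f = (X - a)^n - (X - b)^n` equals
`(X - a) A - (X - b) B` and `f' = n (A - B)`. Since `f - (X - a)(A - B) = (b - a) B` and
`f - (X - b)(A - B) = (b - a) A`, the ideal `(f, f')` contains the coprime polynomials `A` and `B`
as soon as `a - b` and `n` are units. For `𝒬` take `a = ζ` and `b = ζ⁻¹`, which differ because
`ζ² ≠ 1` when `ℓ > 2`.
-/

theorem IsCoprime.mul_sub_mul_sub {R : Type*} [CommRing R] {A B u v : R}
    (h : IsCoprime A B) (huv : IsUnit (u - v)) : IsCoprime (u * A - v * B) (A - B) := by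
  obtain ⟨s, t, hst⟩ := h
  obtain ⟨w, hw⟩ := huv.exists_left_inv
  exact ⟨w * (s + t), -(w * (s * v + t * u)), by linear_combination w * (u - v) * hst + hw⟩

theorem Polynomial.separable_X_sub_C_pow_sub_X_sub_C_pow {R : Type*} [CommRing R] {a b : R}
    (hab : IsUnit (a - b)) {n : ℕ} (hn : IsUnit (n : R)) :
    ((X - C a) ^ n - (X - C b) ^ n).Separable := by
  nontriviality R
  obtain ⟨k, rfl⟩ := Nat.exists_eq_add_one_of_ne_zero (n := n) (by rintro rfl; simp at hn)
  have hAB : IsCoprime ((X - C a) ^ k) ((X - C b) ^ k) :=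
    (isCoprime_X_sub_C_of_isUnit_sub hab).pow
  have huv : IsUnit (X - C a - (X - C b)) := by
    rw [sub_sub_sub_cancel_left, ← C_sub, isUnit_C, ← neg_sub]
    exact hab.neg
  rw [separable_def, derivative_sub, derivative_X_sub_C_pow, derivative_X_sub_C_pow,
    Nat.add_sub_cancel, ← mul_sub, isCoprime_mul_unit_left_right (isUnit_C.mpr hn),
    pow_succ', pow_succ']
  exact hAB.mul_sub_mul_sub huv

theorem IsPrimitiveRoot.inv_ne_self {K : Type*} [Field K] {ζ : K} {k : ℕ}
    (hζ : IsPrimitiveRoot ζ k) (hk : 2 < k) : ζ⁻¹ ≠ ζ := by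
  intro h
  have hsq : ζ ^ 2 = 1 := by
    rw [sq]
    nth_rewrite 1 [← h]
    exact inv_mul_cancel₀ (hζ.ne_zero (by omega))
  have := Nat.le_of_dvd two_pos ((hζ.pow_eq_one_iff_dvd 2).mp hsq)
  omega

/-- Let `ℓ` be an odd prime and `E` a field of characteristic not dividing `ℓ` containing a
primitive `ℓ`-th root of unity `ζ`.  The Rikuna polynomial
`𝒬(X) = (ζ⁻¹ - ζ)⁻¹ ((X - ζ)^ℓ - (X - ζ⁻¹)^ℓ)` is separable (has no repeated roots). -/
theorem stmt_13 (ℓ : ℕ) (hℓ : ℓ.Prime) (hodd : Odd ℓ)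
    (E : Type*) [Field E] (hchar : (ℓ : E) ≠ 0) (ζ : E) (hζ : IsPrimitiveRoot ζ ℓ) :
    (C (ζ⁻¹ - ζ)⁻¹ * ((X - C ζ) ^ ℓ - (X - C ζ⁻¹) ^ ℓ)).Separable := by
  have hℓ2 : 2 < ℓ := by
    obtain ⟨k, rfl⟩ := hodd
    have := hℓ.two_le
    omega
  have hne : ζ⁻¹ ≠ ζ := hζ.inv_ne_self hℓ2
  refine Separable.unit_mul (isUnit_C.mpr (inv_ne_zero (sub_ne_zero.mpr hne)).isUnit) ?_
  exact separable_X_sub_C_pow_sub_X_sub_C_pow (sub_ne_zero.mpr hne.symm).isUnit hchar.isUnit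
end

section
/- Let q be an odd prime power and ℓ an odd prime not dividing q with q ≡ −1 (mod ℓ), let ζ be a primitive ℓ-th root of unity in the quadratic extension 𝔽_{q²} of 𝔽_q, and let ω = ζ + ζ^{-1} ∈ 𝔽_q. Let m > 1 be an integer and γ ∈ 𝔽_q such that X^m − (ℓζ + γ) is irreducible over 𝔽_{q²}. Then the polynomial Q(Z) = (Z^m − γ)² − ℓω(Z^m − γ) + ℓ², of degree 2m, is irreducible over 𝔽_q. -/
/-!
Over `E = 𝔽_{q²}` the quadratic in `Y = Z^m - γ` splits as `(Y - ℓζ)(Y - ℓζ⁻¹)`, so `Q` becomes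
the product of `P = X^m - (ℓζ + γ)` and its Frobenius conjugate `X^m - (ℓζ^q + γ)`, both
irreducible. A proper factor of `Q` over `𝔽_q` would therefore map to an associate of `P`; the
constant term of the monic such associate would put `ℓζ + γ`, hence `ζ`, in `𝔽_q`. But `ζ ∈ 𝔽_q`
would force `ℓ ∣ q - 1`, and with `ℓ ∣ q + 1` also `ℓ ∣ 2`.
-/

open Polynomial

section FieldExtension

variable {F E : Type*} [Field F] [Field E]

theorem Polynomial.mem_range_of_associated_X_pow_sub_C_map (f : F →+* E) {m : ℕ} (hm : m ≠ 0)
    {c : E} {A : F[X]} (h : Associated (X ^ m - C c) (A.map f)) : c ∈ f.range := by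
  have hA : A ≠ 0 := by
    rintro rfl
    exact (monic_X_pow_sub_C c hm).ne_zero (h.eq_zero_iff.mpr (Polynomial.map_zero f))
  have hmonic : (A * C A.leadingCoeff⁻¹).Monic := monic_mul_leadingCoeff_inv hA
  have heq : X ^ m - C c = (A * C A.leadingCoeff⁻¹).map f := by
    refine eq_of_monic_of_associated (monic_X_pow_sub_C c hm) (hmonic.map f) (h.trans ?_)
    rw [Polynomial.map_mul, map_C]
    exact associated_mul_unit_right _ _
      (isUnit_C.mpr ((leadingCoeff_ne_zero.mpr hA).isUnit.inv.map f))
  refine ⟨-(A * C A.leadingCoeff⁻¹).coeff 0, ?_⟩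
  rw [map_neg, ← coeff_map, ← heq]
  simp [coeff_X_pow, hm.symm]

theorem Polynomial.irreducible_of_map_eq_mul (f : F →+* E) {Q : F[X]} {P P' : E[X]}
    (hP : Irreducible P) (hP' : Irreducible P') (hQ : Q.map f = P * P')
    (hPmap : ∀ A : F[X], ¬ Associated P (A.map f)) : Irreducible Q := by
  have key : ∀ A B : F[X], Q = A * B → P ∣ A.map f → IsUnit B := by
    rintro A B rfl ⟨R, hR⟩
    have hRB : P' = R * B.map f := by
      apply mul_left_cancel₀ hP.ne_zero
      rw [← hQ, Polynomial.map_mul, hR, mul_assoc]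
    rcases hP'.isUnit_or_isUnit hRB with hRu | hB
    · exact absurd ⟨hRu.unit, by rw [hRu.unit_spec, hR]⟩ (hPmap A)
    · exact (isUnit_map f).mp hB
  refine ⟨fun hQu => hP.not_isUnit (isUnit_of_mul_isUnit_left (y := P') ?_), fun A B hAB => ?_⟩
  · rw [← hQ]
    exact (isUnit_map f).mpr hQu
  rcases hP.prime.dvd_or_dvd (show P ∣ A.map f * B.map f from
      ⟨P', by rw [← Polynomial.map_mul, ← hAB, hQ]⟩) with hA | hB
  · exact .inr (key A B hAB hA)
  · exact .inl (key B A (hAB.trans (mul_comm A B)) hB)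

end FieldExtension

theorem IsPrimitiveRoot.pow_eq_inv_of_dvd_add_one {M : Type*} [DivisionCommMonoid M] {ζ : M}
    {ℓ q : ℕ} (hζ : IsPrimitiveRoot ζ ℓ) (h : ℓ ∣ q + 1) : ζ ^ q = ζ⁻¹ :=
  eq_inv_of_mul_eq_one_left (by rw [← pow_succ, hζ.pow_eq_one_iff_dvd]; exact h)

section FiniteField

variable {F : Type*} [Field F] [Fintype F]

theorem FiniteField.natCast_ne_zero_of_dvd_card_add_one {ℓ : ℕ} (h : ℓ ∣ Fintype.card F + 1) :
    (ℓ : F) ≠ 0 := by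
  obtain ⟨t, ht⟩ := h
  intro hℓ
  have := congrArg (Nat.cast : ℕ → F) ht
  simp [hℓ] at this

theorem IsPrimitiveRoot.notMem_range_of_dvd_card_add_one {E : Type*} [Field E] (f : F →+* E)
    {ζ : E} {ℓ : ℕ} (hζ : IsPrimitiveRoot ζ ℓ) (hℓ : 2 < ℓ) (h : ℓ ∣ Fintype.card F + 1) :
    ζ ∉ f.range := by
  rintro ⟨y, rfl⟩
  have hy : IsPrimitiveRoot y ℓ := hζ.of_map_of_injective f.injective
  have hsub : ℓ ∣ Fintype.card F - 1 :=
    hy.dvd_of_pow_eq_one _ (FiniteField.pow_card_sub_one_eq_one y (hy.ne_zero (by omega)))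
  have htwo : ℓ ∣ 2 := by
    have := Nat.dvd_sub h hsub
    rwa [show Fintype.card F + 1 - (Fintype.card F - 1) = 2 by
      have := Fintype.card_pos (α := F); omega] at this
  exact absurd (Nat.le_of_dvd two_pos htwo) (by omega)

theorem IsPrimitiveRoot.natCast_mul_add_notMem_range {E : Type*} [Field E] (f : F →+* E)
    {ζ : E} {ℓ : ℕ} (hζ : IsPrimitiveRoot ζ ℓ) (hℓ : 2 < ℓ) (h : ℓ ∣ Fintype.card F + 1)
    (γ : F) : (ℓ : E) * ζ + f γ ∉ f.range := by
  rintro ⟨x, hx⟩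
  have hℓE : (ℓ : E) ≠ 0 := by
    simpa using (map_ne_zero f).mpr (FiniteField.natCast_ne_zero_of_dvd_card_add_one h)
  refine hζ.notMem_range_of_dvd_card_add_one f hℓ h ⟨(x - γ) / ℓ, ?_⟩
  rw [map_div₀, map_sub, hx, map_natCast, add_sub_cancel_right, mul_div_cancel_left₀ _ hℓE]

end FiniteField

theorem stmt_16_general (q ℓ : ℕ)
    (hℓ : ℓ.Prime) (hℓodd : Odd ℓ) (hcong : ℓ ∣ q + 1)
    (F E : Type*) [Field F] [Field E] [Algebra F E] [Fintype F] [Fintype E]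
    (hcardF : Fintype.card F = q)
    (ζ : E) (hζ : IsPrimitiveRoot ζ ℓ)
    (ω : F) (hω : algebraMap F E ω = ζ + ζ⁻¹)
    (m : ℕ) (hm : 1 < m) (γ : F)
    (hirr : Irreducible (X ^ m - C ((ℓ : E) * ζ + algebraMap F E γ) : Polynomial E)) :
    Irreducible ((X ^ m - C γ) ^ 2 - C ((ℓ : F) * ω) * (X ^ m - C γ)
      + C ((ℓ : F) ^ 2) : Polynomial F) := by
  subst hcardF
  set f := algebraMap F E
  set σ := FiniteField.frobeniusAlgEquivOfAlgebraic F E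
  have hℓ2 : 2 < ℓ := by
    obtain ⟨k, rfl⟩ := hℓodd
    have := hℓ.two_le
    omega
  have hσ : σ ((ℓ : E) * ζ + f γ) = ℓ * ζ⁻¹ + f γ := by
    rw [map_add, map_mul, map_natCast, AlgEquiv.commutes,
      FiniteField.frobeniusAlgEquivOfAlgebraic_apply, hζ.pow_eq_inv_of_dvd_add_one hcong]
  have hirr' : Irreducible (X ^ m - C ((ℓ : E) * ζ⁻¹ + f γ)) := by
    rw [← hσ]
    simpa using (MulEquiv.irreducible_iff (mapEquiv σ.toRingEquiv).toMulEquiv).mpr hirr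
  have hfac : ((X ^ m - C γ) ^ 2 - C ((ℓ : F) * ω) * (X ^ m - C γ) + C ((ℓ : F) ^ 2)).map f =
      (X ^ m - C ((ℓ : E) * ζ + f γ)) * (X ^ m - C ((ℓ : E) * ζ⁻¹ + f γ)) := by
    have hζζ : (C ζ * C ζ⁻¹ : E[X]) = 1 := by
      rw [← C_mul, mul_inv_cancel₀ (hζ.ne_zero (by omega)), C_1]
    simp only [Polynomial.map_add, Polynomial.map_sub, Polynomial.map_mul, Polynomial.map_pow,
      map_X, map_C]
    simp only [map_add, map_mul, map_pow, map_natCast, f, hω]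
    linear_combination (-(ℓ : E[X]) ^ 2) * hζζ
  exact irreducible_of_map_eq_mul f hirr hirr' hfac fun A hA =>
    hζ.natCast_mul_add_notMem_range f hℓ2 hcong γ
      (mem_range_of_associated_X_pow_sub_C_map f (by omega) hA)

/-- Let `q` be an odd prime power, `ℓ` an odd prime with `ℓ ∤ q` and `q ≡ -1 (mod ℓ)`,
`ζ` a primitive `ℓ`-th root of unity in the quadratic extension `E = 𝔽_{q²}` of `F = 𝔽_q`,
and `ω = ζ + ζ⁻¹ ∈ 𝔽_q`.  Let `m > 1` and `γ ∈ 𝔽_q` with `X^m - (ℓζ + γ)` irreducible over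
`𝔽_{q²}`.  Then `Q(Z) = (Z^m - γ)² - ℓω(Z^m - γ) + ℓ²`, of degree `2m`, is irreducible over
`𝔽_q`. -/
theorem stmt_16 (q ℓ : ℕ) (hqodd : Odd q) (hq : IsPrimePow q)
    (hℓ : ℓ.Prime) (hℓodd : Odd ℓ) (hℓq : ¬ ℓ ∣ q) (hcong : ℓ ∣ q + 1)
    (F E : Type*) [Field F] [Field E] [Algebra F E] [Fintype F] [Fintype E]
    (hcardF : Fintype.card F = q) (hcardE : Fintype.card E = q ^ 2)
    (ζ : E) (hζ : IsPrimitiveRoot ζ ℓ)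
    (ω : F) (hω : algebraMap F E ω = ζ + ζ⁻¹)
    (m : ℕ) (hm : 1 < m) (γ : F)
    (hirr : Irreducible (X ^ m - C ((ℓ : E) * ζ + algebraMap F E γ) : Polynomial E)) :
    Irreducible ((X ^ m - C γ) ^ 2 - C ((ℓ : F) * ω) * (X ^ m - C γ)
      + C ((ℓ : F) ^ 2) : Polynomial F) :=
  stmt_16_general q ℓ hℓ hℓodd hcong F E hcardF ζ hζ ω hω m hm γ hirr
end
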